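/- arXiv:1905.08302 — 4 statements merged into one kernel-verified Lean document; each statement's English description precedes it below -/
import Mathlib

section
/- Let p₁, …, p_k be nonnegative reals with p₁ + ⋯ + p_k = 1 and p_i ≤ 1/2 for every i. Then ∏_{i=1}^k (1 - p_i) ≥ 1/4. -/
/-!
The convex function `x ↦ ((1 - t) ^ t⁻¹) ^ x` takes the values `1` at `0` and `1 - t` at `t`,
so on `[0, t]` it lies below its chord `1 - x`. Multiplying over the `p i ≤ 1 / 2` turns the sum
`∑ p i = 1` into the exponent: `∏ (1 - p i) ≥ (1 / 2) ^ 2`.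
-/

open Finset

namespace Real

theorem rpow_inv_rpow_le_one_sub {t x : ℝ} (ht : 0 < t) (ht1 : t < 1) (hx : 0 ≤ x) (hxt : x ≤ t) :
    ((1 - t) ^ t⁻¹) ^ x ≤ 1 - x := by
  have hb : 0 < (1 - t) ^ t⁻¹ := rpow_pos_of_pos (by linarith) _
  have hconv := (convexOn_rpow_left hb).2 (Set.mem_univ 0) (Set.mem_univ t)
    (sub_nonneg.2 ((div_le_one ht).2 hxt)) (div_nonneg hx ht.le) (sub_add_cancel 1 (x / t))
  have hx_eq : (1 - x / t) * 0 + x / t * t = x := by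
    rw [mul_zero, zero_add, div_mul_cancel₀ x ht.ne']
  simp only [smul_eq_mul] at hconv
  rw [hx_eq, rpow_zero, rpow_inv_rpow (by linarith) ht.ne'] at hconv
  calc ((1 - t) ^ t⁻¹) ^ x ≤ (1 - x / t) * 1 + x / t * (1 - t) := hconv
    _ = 1 - x := by field_simp; ring

theorem rpow_sum_le_prod_one_sub {ι : Type*} (s : Finset ι) {p : ι → ℝ} {t : ℝ} (ht : 0 < t)
    (ht1 : t < 1) (hp0 : ∀ i ∈ s, 0 ≤ p i) (hpt : ∀ i ∈ s, p i ≤ t) :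
    ((1 - t) ^ t⁻¹) ^ (∑ i ∈ s, p i) ≤ ∏ i ∈ s, (1 - p i) := by
  rw [rpow_sum_of_pos (rpow_pos_of_pos (by linarith) _)]
  exact prod_le_prod (fun i _ => (rpow_pos_of_pos (rpow_pos_of_pos (by linarith) _) _).le)
    fun i hi => rpow_inv_rpow_le_one_sub ht ht1 (hp0 i hi) (hpt i hi)

end Real

theorem prod_one_sub_ge_quarter (k : ℕ) (p : Fin k → ℝ)
    (hp0 : ∀ i, 0 ≤ p i) (hp1 : ∑ i, p i = 1) (hphalf : ∀ i, p i ≤ 1 / 2) :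
    ∏ i, (1 - p i) ≥ 1 / 4 := by
  have h := Real.rpow_sum_le_prod_one_sub univ (t := 1 / 2) (by norm_num) (by norm_num)
    (fun i _ => hp0 i) (fun i _ => hphalf i)
  rw [hp1, Real.rpow_one] at h
  norm_num at h ⊢
  exact h
end

section
/- Let p be a probability distribution on [k] with p_i ≤ 1/2 for all i, and let X₁,…,X_{2k} be i.i.d. samples from p. Define, for each i ∈ [k], the event E_i that X_{2i-1} = i, X_{2j-1} ≠ j for all j ≠ i, and X_{2i} ≠ i. Then P(E_i) = p_i · ∏_{j=1}^k (1 - p_j) for every i ∈ [k]; in particular, conditioned on the union ⋃_i E_i occurring (these events are disjoint), the index i of the occurring event is distributed according to p. -/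
/-!
`simEvent X i` constrains one coordinate per index: `X (i, 0) ∈ {i}`, `X (j, 0) ∈ {j}ᶜ` for `j ≠ i`
and `X (i, 1) ∈ {i}ᶜ`. By independence its probability is
`p i (1 - p i) ∏_{j ≠ i} (1 - p j) = p i ∏_j (1 - p j)`. The events are disjoint, since on
`simEvent X i` the first player of pair `i` sees `i`, so their union has probability
`∏_j (1 - p j)`, which is nonzero because every `p j ≤ 1/2`; dividing leaves `p i`.
-/

open MeasureTheory ProbabilityTheory

/-- The event that, among the pairs of players, exactly the pair `i` fires:
the first player of pair `i` observes `i`, the first player of every other pair `j`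
does not observe `j`, and the second player of pair `i` does not observe `i`. -/
def simEvent {Ω : Type*} {k : ℕ} (X : Fin k × Fin 2 → Ω → Fin k) (i : Fin k) :
    Set Ω :=
  {ω | X (i, 0) ω = i ∧ (∀ j : Fin k, j ≠ i → X (j, 0) ω ≠ j) ∧ X (i, 1) ω ≠ i}

open Function

section Conditioning

variable {Ω ι : Type*} [MeasurableSpace Ω] {μ : Measure Ω} [IsFiniteMeasure μ] [Fintype ι]

lemma measureReal_div_measureReal_iUnion_of_eq_mul {E : ι → Set Ω}
    (hdisj : Pairwise (Disjoint on E)) (hmeas : ∀ i, MeasurableSet (E i))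
    {p : ι → ℝ} (hp : ∑ i, p i = 1) {c : ℝ} (hc : c ≠ 0) (hE : ∀ i, μ.real (E i) = p i * c)
    (i : ι) : μ.real (E i) / μ.real (⋃ j, E j) = p i := by
  have hunion : μ.real (⋃ j, E j) = c := by
    rw [measureReal_iUnion_fintype hdisj hmeas]
    simp_rw [hE, ← Finset.sum_mul, hp, one_mul]
  rw [hE, hunion, mul_div_cancel_right₀ _ hc]

end Conditioning

section SimEvent

variable {Ω : Type*} {k : ℕ}

/-- Constraining every coordinate, the unused ones by `Set.univ`, lets independence be applied to
the full family `X` at once. -/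
def simTarget (i : Fin k) (n : Fin k × Fin 2) : Set (Fin k) :=
  if n.2 = 0 then (if n.1 = i then {i} else {n.1}ᶜ) else (if n.1 = i then {i}ᶜ else Set.univ)

lemma simEvent_eq_iInter_preimage (X : Fin k × Fin 2 → Ω → Fin k) (i : Fin k) :
    simEvent X i = ⋂ n, X n ⁻¹' simTarget i n := by
  ext ω
  simp only [simEvent, simTarget, Set.mem_ofPred_eq, Set.mem_iInter, Set.mem_preimage,
    Prod.forall, Fin.forall_fin_two]
  constructor
  · rintro ⟨hi, hothers, hsecond⟩ j
    by_cases hj : j = i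
    · subst hj; simp [hi, hsecond]
    · simp [hj, hothers j hj]
  · intro h
    refine ⟨by simpa using (h i).1, fun j hj => by simpa [hj] using (h j).1, by simpa using (h i).2⟩

lemma pairwise_disjoint_simEvent (X : Fin k × Fin 2 → Ω → Fin k) :
    Pairwise (Disjoint on simEvent X) :=
  fun a _ hab => Set.disjoint_left.2 fun _ ha hb => hb.2.1 a hab ha.1

variable [MeasurableSpace Ω] {X : Fin k × Fin 2 → Ω → Fin k}

lemma measurableSet_simEvent (hmeas : ∀ n, Measurable (X n)) (i : Fin k) :
    MeasurableSet (simEvent X i) := by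
  rw [simEvent_eq_iInter_preimage]
  exact .iInter fun n => hmeas n .of_discrete

variable {μ : Measure Ω} [IsProbabilityMeasure μ] {p : Fin k → ℝ}

lemma measureReal_simEvent (hmeas : ∀ n, Measurable (X n)) (hindep : iIndepFun X μ)
    (hlaw : ∀ n a, μ.real {ω | X n ω = a} = p a) (i : Fin k) :
    μ.real (simEvent X i) = p i * ∏ j, (1 - p j) := by
  have hsingle : ∀ n a, μ.real (X n ⁻¹' {a}) = p a := hlaw
  have hcompl : ∀ n a, μ.real (X n ⁻¹' {a})ᶜ = 1 - p a := fun n a => by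
    rw [probReal_compl_eq_one_sub (hmeas n (.singleton a)), hsingle]
  calc μ.real (simEvent X i) = ∏ n, μ.real (X n ⁻¹' simTarget i n) := by
        rw [simEvent_eq_iInter_preimage, measureReal_def,
          hindep.meas_iInter fun n => ⟨_, .of_discrete, rfl⟩, ENNReal.toReal_prod]
        rfl
    _ = ∏ j, (if j = i then p i else 1) * (1 - p j) := by
        rw [Fintype.prod_prod_type]
        refine Finset.prod_congr rfl fun j _ => ?_
        by_cases hj : j = i
        · subst hj; simp [simTarget, hsingle, hcompl]
        · simp [simTarget, hj, hcompl]
    _ = p i * ∏ j, (1 - p j) := by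
        rw [Finset.prod_mul_distrib, Finset.prod_ite_eq']
        simp

end SimEvent

theorem basic_simulation_correctness_general {Ω : Type*} [MeasurableSpace Ω]
    (μ : Measure Ω) [IsProbabilityMeasure μ]
    (k : ℕ) (p : Fin k → ℝ)
    (hp1 : ∑ i, p i = 1) (hphalf : ∀ i, p i ≤ 1 / 2)
    (X : Fin k × Fin 2 → Ω → Fin k) (hmeas : ∀ n, Measurable (X n))
    (hindep : iIndepFun X μ)
    (hlaw : ∀ n i, (μ {ω | X n ω = i}).toReal = p i) :
    (∀ i : Fin k, (μ (simEvent X i)).toReal = p i * ∏ j, (1 - p j)) ∧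
    (∀ i : Fin k,
      (μ (simEvent X i)).toReal / (μ (⋃ j : Fin k, simEvent X j)).toReal = p i) := by
  have hE : ∀ i, μ.real (simEvent X i) = p i * ∏ j, (1 - p j) :=
    measureReal_simEvent hmeas hindep hlaw
  have hprod_ne : ∏ j, (1 - p j) ≠ 0 :=
    Finset.prod_ne_zero_iff.2 fun j _ => by linarith [hphalf j]
  exact ⟨hE, measureReal_div_measureReal_iUnion_of_eq_mul (pairwise_disjoint_simEvent X)
    (measurableSet_simEvent hmeas) hp1 hprod_ne hE⟩

theorem basic_simulation_correctness {Ω : Type*} [MeasurableSpace Ω]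
    (μ : Measure Ω) [IsProbabilityMeasure μ]
    (k : ℕ) (hk : 0 < k) (p : Fin k → ℝ)
    (hp0 : ∀ i, 0 ≤ p i) (hp1 : ∑ i, p i = 1) (hphalf : ∀ i, p i ≤ 1 / 2)
    (X : Fin k × Fin 2 → Ω → Fin k) (hmeas : ∀ n, Measurable (X n))
    (hindep : iIndepFun X μ)
    (hlaw : ∀ n i, (μ {ω | X n ω = i}).toReal = p i) :
    (∀ i : Fin k, (μ (simEvent X i)).toReal = p i * ∏ j, (1 - p j)) ∧
    (∀ i : Fin k,
      (μ (simEvent X i)).toReal / (μ (⋃ j : Fin k, simEvent X j)).toReal = p i) :=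
  basic_simulation_correctness_general μ k p hp1 hphalf X hmeas hindep hlaw
end

section
/- Let Y₁,…,Y_k be exchangeable random variables with values in [L] (i.e., their joint distribution is invariant under permutations of indices), let δ ∈ ℝ^k with ∑_i δ_i = 0, and define Z_r = ∑_{i=1}^k δ_i·1{Y_i = r}. Then for each r, E[Z_r⁴] ≤ 12·P(Y₁ = r)·‖δ‖₂⁴, and hence ∑_{r=1}^L E[Z_r⁴] ≤ 12‖δ‖₂⁴. -/
open MeasureTheory ProbabilityTheory Finset

lemma subtypeCongr_mem {α : Type*} {p q : α → Prop} [DecidablePred p] [DecidablePred q]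
    (e : { x // p x } ≃ { x // q x }) (f : { x // ¬p x } ≃ { x // ¬q x }) (x : α) :
    q (Equiv.subtypeCongr e f x) ↔ p x := by
  by_cases h : p x
  · simp only [Equiv.subtypeCongr, Equiv.trans_apply, Equiv.sumCompl_symm_apply_of_pos h,
      Equiv.sumCongr_apply, Sum.map_inl, Equiv.sumCompl_apply_inl]
    exact iff_of_true (e ⟨x, h⟩).2 h
  · simp only [Equiv.subtypeCongr, Equiv.trans_apply, Equiv.sumCompl_symm_apply_of_neg h,
      Equiv.sumCongr_apply, Sum.map_inr, Equiv.sumCompl_apply_inr]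
    exact iff_of_false (f ⟨x, h⟩).2 h

lemma exists_perm_mem_iff {α : Type*} [Fintype α] [DecidableEq α] {S T : Finset α}
    (h : S.card = T.card) : ∃ σ : Equiv.Perm α, ∀ x, σ x ∈ S ↔ x ∈ T := by
  have h1 : Fintype.card {x // x ∈ T} = Fintype.card {x // x ∈ S} := by
    simp [Fintype.card_coe, h]
  have h2 : Fintype.card {x // ¬ x ∈ T} = Fintype.card {x // ¬ x ∈ S} := by
    rw [Fintype.card_subtype_compl, Fintype.card_subtype_compl, h1]
  exact ⟨Equiv.subtypeCongr (Fintype.equivOfCardEq h1) (Fintype.equivOfCardEq h2),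
    fun x => subtypeCongr_mem _ _ x⟩

lemma joint_event_invariant {Ω : Type*} [MeasurableSpace Ω] (μ : Measure Ω) {k L : ℕ}
    (Y : Fin k → Ω → Fin L) (hmeas : ∀ i, Measurable (Y i))
    (hexch : ∀ σ : Equiv.Perm (Fin k),
      IdentDistrib (fun ω (i : Fin k) => Y (σ i) ω) (fun ω (i : Fin k) => Y i ω) μ μ)
    (r : Fin L) {S T : Finset (Fin k)} (h : S.card = T.card) :
    μ {ω | ∀ i ∈ S, Y i ω = r} = μ {ω | ∀ i ∈ T, Y i ω = r} := by
  obtain ⟨σ, hσ⟩ := exists_perm_mem_iff h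
  have hmY : Measurable (fun ω (i : Fin k) => Y i ω) := measurable_pi_lambda _ hmeas
  have hmYσ : Measurable (fun ω (i : Fin k) => Y (σ i) ω) :=
    measurable_pi_lambda _ (fun i => hmeas _)
  have hmap := (hexch σ).map_eq
  have hB : MeasurableSet {v : Fin k → Fin L | ∀ i ∈ T, v i = r} := by
    have : {v : Fin k → Fin L | ∀ i ∈ T, v i = r}
        = ⋂ i ∈ (T : Set (Fin k)), (fun v : Fin k → Fin L => v i) ⁻¹' {r} := by
      ext v; simp
    rw [this]
    exact MeasurableSet.biInter (T : Set (Fin k)).to_countable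
      (fun i _ => (measurable_pi_apply i) (measurableSet_singleton r))
  calc μ {ω | ∀ i ∈ S, Y i ω = r}
      = μ ((fun ω (i : Fin k) => Y (σ i) ω) ⁻¹' {v | ∀ i ∈ T, v i = r}) := by
        congr 1
        ext ω
        simp only [Set.mem_setOf_eq, Set.mem_preimage]
        constructor
        · intro hS i hi; exact hS _ ((hσ i).mpr hi)
        · intro hT j hj
          have h1 : σ (σ.symm j) ∈ S := by simpa using hj
          have h2 := hT (σ.symm j) ((hσ _).mp h1)
          simpa using h2
    _ = μ ((fun ω (i : Fin k) => Y i ω) ⁻¹' {v | ∀ i ∈ T, v i = r}) := by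
        rw [← Measure.map_apply hmYσ hB, ← Measure.map_apply hmY hB, hmap]
    _ = μ {ω | ∀ i ∈ T, Y i ω = r} := rfl

lemma partition_identity {α : Type*} [DecidableEq α] (Q : ℕ → ℝ) (i j l m : α) :
    Q (({i, j, l, m} : Finset α).card) =
      Q 4
      + (Q 3 - Q 4) * ((if i = j then (1:ℝ) else 0) + (if i = l then (1:ℝ) else 0)
          + (if i = m then (1:ℝ) else 0) + (if j = l then (1:ℝ) else 0)
          + (if j = m then (1:ℝ) else 0) + (if l = m then (1:ℝ) else 0))
      + (Q 2 - 2*Q 3 + Q 4) * ((if i = j then (1:ℝ) else 0) * (if l = m then (1:ℝ) else 0)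
          + (if i = l then (1:ℝ) else 0) * (if j = m then (1:ℝ) else 0)
          + (if i = m then (1:ℝ) else 0) * (if j = l then (1:ℝ) else 0))
      + (Q 2 - 3*Q 3 + 2*Q 4) * ((if i = j then (1:ℝ) else 0) * (if i = l then (1:ℝ) else 0)
          + (if i = j then (1:ℝ) else 0) * (if i = m then (1:ℝ) else 0)
          + (if i = l then (1:ℝ) else 0) * (if i = m then (1:ℝ) else 0)
          + (if j = l then (1:ℝ) else 0) * (if j = m then (1:ℝ) else 0))
      + (Q 1 - 7*Q 2 + 12*Q 3 - 6*Q 4) * ((if i = j then (1:ℝ) else 0)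
          * (if i = l then (1:ℝ) else 0) * (if i = m then (1:ℝ) else 0)) := by
  by_cases hij : i = j <;> by_cases hil : i = l <;> by_cases him : i = m <;>
    by_cases hjl : j = l <;> by_cases hjm : j = m <;> by_cases hlm : l = m <;>
    simp_all [Finset.card_insert_of_notMem, Finset.card_pair, ne_comm] <;> (try simp_all [eq_comm]) <;> ring
lemma quad_sum_eval {k : ℕ} (δ : Fin k → ℝ) (hδ : ∑ i, δ i = 0) (Q : ℕ → ℝ) :
    ∑ i, ∑ j, ∑ l, ∑ m, (δ i * δ j * δ l * δ m) * Q (({i, j, l, m} : Finset (Fin k)).card)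
      = 3*(Q 2 - 2*Q 3 + Q 4)*(∑ i, δ i ^ 2)^2
        + (Q 1 - 7*Q 2 + 12*Q 3 - 6*Q 4)*(∑ i, δ i ^ 4) := by
  have hcol : ∀ (c : ℝ) (a : Fin k),
      (∑ x, (c * δ x) * (if a = x then (1:ℝ) else 0)) = c * δ a := by
    intro c a
    simp [mul_ite, Finset.sum_ite_eq]
  have hzero : ∀ c : ℝ, (∑ x, c * δ x) = 0 := fun c => by
    rw [← Finset.mul_sum, hδ, mul_zero]
  have hpow : ∀ (c : ℝ) (n : ℕ), (∑ x, c * δ x ^ n) = c * ∑ x, δ x ^ n := fun c n =>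
    (Finset.mul_sum _ _ _).symm
  have hm : ∀ i j l : Fin k,
      (∑ m, (δ i * δ j * δ l * δ m) * Q (({i, j, l, m} : Finset (Fin k)).card)) =
        (((Q 3 - Q 4) + (Q 2 - 2*Q 3 + Q 4) * (if j = l then (1:ℝ) else 0)
            + (Q 2 - 3*Q 3 + 2*Q 4) * ((if i = j then (1:ℝ) else 0) + (if i = l then (1:ℝ) else 0))
            + (Q 1 - 7*Q 2 + 12*Q 3 - 6*Q 4) * ((if i = j then (1:ℝ) else 0) * (if i = l then (1:ℝ) else 0)))
          * (δ i * δ j * δ l)) * δ i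
        + ((((Q 3 - Q 4) + (Q 2 - 2*Q 3 + Q 4) * (if i = l then (1:ℝ) else 0)
            + (Q 2 - 3*Q 3 + 2*Q 4) * (if j = l then (1:ℝ) else 0)) * (δ i * δ j * δ l)) * δ j)
        + ((((Q 3 - Q 4) + (Q 2 - 2*Q 3 + Q 4) * (if i = j then (1:ℝ) else 0)) * (δ i * δ j * δ l)) * δ l) := by
    intro i j l
    calc (∑ m, (δ i * δ j * δ l * δ m) * Q (({i, j, l, m} : Finset (Fin k)).card))
        = ∑ m, (((Q 4 + (Q 3 - Q 4) * ((if i = j then (1:ℝ) else 0) + (if i = l then (1:ℝ) else 0)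
              + (if j = l then (1:ℝ) else 0))
              + (Q 2 - 3*Q 3 + 2*Q 4) * ((if i = j then (1:ℝ) else 0) * (if i = l then (1:ℝ) else 0)))
              * (δ i * δ j * δ l)) * δ m
            + ((((Q 3 - Q 4) + (Q 2 - 2*Q 3 + Q 4) * (if j = l then (1:ℝ) else 0)
              + (Q 2 - 3*Q 3 + 2*Q 4) * ((if i = j then (1:ℝ) else 0) + (if i = l then (1:ℝ) else 0))
              + (Q 1 - 7*Q 2 + 12*Q 3 - 6*Q 4) * ((if i = j then (1:ℝ) else 0) * (if i = l then (1:ℝ) else 0)))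
              * (δ i * δ j * δ l)) * δ m) * (if i = m then (1:ℝ) else 0)
            + ((((Q 3 - Q 4) + (Q 2 - 2*Q 3 + Q 4) * (if i = l then (1:ℝ) else 0)
              + (Q 2 - 3*Q 3 + 2*Q 4) * (if j = l then (1:ℝ) else 0))
              * (δ i * δ j * δ l)) * δ m) * (if j = m then (1:ℝ) else 0)
            + ((((Q 3 - Q 4) + (Q 2 - 2*Q 3 + Q 4) * (if i = j then (1:ℝ) else 0))
              * (δ i * δ j * δ l)) * δ m) * (if l = m then (1:ℝ) else 0)) := by
          refine Finset.sum_congr rfl fun m _ => ?_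
          rw [partition_identity Q i j l m]
          ring
      _ = _ := by
          rw [Finset.sum_add_distrib, Finset.sum_add_distrib, Finset.sum_add_distrib,
            hzero, hcol, hcol, hcol]
          ring
  have hl : ∀ i j : Fin k,
      (∑ l, ((((Q 3 - Q 4) + (Q 2 - 2*Q 3 + Q 4) * (if j = l then (1:ℝ) else 0)
            + (Q 2 - 3*Q 3 + 2*Q 4) * ((if i = j then (1:ℝ) else 0) + (if i = l then (1:ℝ) else 0))
            + (Q 1 - 7*Q 2 + 12*Q 3 - 6*Q 4) * ((if i = j then (1:ℝ) else 0) * (if i = l then (1:ℝ) else 0)))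
          * (δ i * δ j * δ l)) * δ i
        + ((((Q 3 - Q 4) + (Q 2 - 2*Q 3 + Q 4) * (if i = l then (1:ℝ) else 0)
            + (Q 2 - 3*Q 3 + 2*Q 4) * (if j = l then (1:ℝ) else 0)) * (δ i * δ j * δ l)) * δ j)
        + ((((Q 3 - Q 4) + (Q 2 - 2*Q 3 + Q 4) * (if i = j then (1:ℝ) else 0)) * (δ i * δ j * δ l)) * δ l))) =
        (((Q 2 - 3*Q 3 + 2*Q 4) + (Q 1 - 7*Q 2 + 12*Q 3 - 6*Q 4) * (if i = j then (1:ℝ) else 0))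
            * (δ i^2 * δ j) + (Q 2 - 2*Q 3 + Q 4) * (δ i * δ j^2)) * δ i
        + (((Q 2 - 2*Q 3 + Q 4) * (δ i^2 * δ j) + (Q 2 - 3*Q 3 + 2*Q 4) * (δ i * δ j^2)) * δ j)
        + ((((Q 3 - Q 4) + (Q 2 - 2*Q 3 + Q 4) * (if i = j then (1:ℝ) else 0)) * (δ i * δ j))
            * (∑ x, δ x ^ 2)) := by
    intro i j
    calc _ = ∑ l, (((((Q 3 - Q 4) + (Q 2 - 3*Q 3 + 2*Q 4) * (if i = j then (1:ℝ) else 0)) * (δ i^2 * δ j)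
              + (Q 3 - Q 4) * (δ i * δ j^2)) * δ l)
          + (((((Q 2 - 3*Q 3 + 2*Q 4) + (Q 1 - 7*Q 2 + 12*Q 3 - 6*Q 4) * (if i = j then (1:ℝ) else 0))
              * (δ i^2 * δ j) + (Q 2 - 2*Q 3 + Q 4) * (δ i * δ j^2)) * δ l) * (if i = l then (1:ℝ) else 0))
          + ((((Q 2 - 2*Q 3 + Q 4) * (δ i^2 * δ j) + (Q 2 - 3*Q 3 + 2*Q 4) * (δ i * δ j^2)) * δ l)
              * (if j = l then (1:ℝ) else 0))
          + ((((Q 3 - Q 4) + (Q 2 - 2*Q 3 + Q 4) * (if i = j then (1:ℝ) else 0)) * (δ i * δ j)) * δ l ^ 2)) := by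
          refine Finset.sum_congr rfl fun l _ => ?_
          ring
      _ = _ := by
          rw [Finset.sum_add_distrib, Finset.sum_add_distrib, Finset.sum_add_distrib,
            hzero, hcol, hcol, hpow]
          ring
  have hj : ∀ i : Fin k,
      (∑ j, ((((Q 2 - 3*Q 3 + 2*Q 4) + (Q 1 - 7*Q 2 + 12*Q 3 - 6*Q 4) * (if i = j then (1:ℝ) else 0))
            * (δ i^2 * δ j) + (Q 2 - 2*Q 3 + Q 4) * (δ i * δ j^2)) * δ i
        + (((Q 2 - 2*Q 3 + Q 4) * (δ i^2 * δ j) + (Q 2 - 3*Q 3 + 2*Q 4) * (δ i * δ j^2)) * δ j)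
        + ((((Q 3 - Q 4) + (Q 2 - 2*Q 3 + Q 4) * (if i = j then (1:ℝ) else 0)) * (δ i * δ j))
            * (∑ x, δ x ^ 2)))) =
        (Q 1 - 7*Q 2 + 12*Q 3 - 6*Q 4) * δ i^4
        + 3*(Q 2 - 2*Q 3 + Q 4) * (∑ x, δ x ^ 2) * δ i^2
        + (Q 2 - 3*Q 3 + 2*Q 4) * (∑ x, δ x ^ 3) * δ i := by
    intro i
    calc _ = ∑ j, ((((Q 2 - 3*Q 3 + 2*Q 4) * δ i^3 + (Q 3 - Q 4) * ((∑ x, δ x ^ 2) * δ i)) * δ j)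
          + ((((Q 1 - 7*Q 2 + 12*Q 3 - 6*Q 4) * δ i^3 + (Q 2 - 2*Q 3 + Q 4) * ((∑ x, δ x ^ 2) * δ i)) * δ j)
              * (if i = j then (1:ℝ) else 0))
          + ((2*(Q 2 - 2*Q 3 + Q 4) * δ i^2) * δ j ^ 2)
          + (((Q 2 - 3*Q 3 + 2*Q 4) * δ i) * δ j ^ 3)) := by
          refine Finset.sum_congr rfl fun j _ => ?_
          ring
      _ = _ := by
          rw [Finset.sum_add_distrib, Finset.sum_add_distrib, Finset.sum_add_distrib,
            hzero, hcol, hpow, hpow]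
          ring
  calc ∑ i, ∑ j, ∑ l, ∑ m, (δ i * δ j * δ l * δ m) * Q (({i, j, l, m} : Finset (Fin k)).card)
      = ∑ i, ((Q 1 - 7*Q 2 + 12*Q 3 - 6*Q 4) * δ i^4
          + 3*(Q 2 - 2*Q 3 + Q 4) * (∑ x, δ x ^ 2) * δ i^2
          + (Q 2 - 3*Q 3 + 2*Q 4) * (∑ x, δ x ^ 3) * δ i) := by
        refine Finset.sum_congr rfl fun i _ => ?_
        rw [← hj i]
        refine Finset.sum_congr rfl fun j _ => ?_
        rw [← hl i j]
        refine Finset.sum_congr rfl fun l _ => ?_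
        exact hm i j l
    _ = ∑ i, ((((Q 2 - 3*Q 3 + 2*Q 4) * (∑ x, δ x ^ 3)) * δ i)
          + ((3*(Q 2 - 2*Q 3 + Q 4) * (∑ x, δ x ^ 2)) * δ i ^ 2)
          + ((Q 1 - 7*Q 2 + 12*Q 3 - 6*Q 4) * δ i ^ 4)) := by
        refine Finset.sum_congr rfl fun i _ => by ring
    _ = _ := by
        rw [Finset.sum_add_distrib, Finset.sum_add_distrib, hzero, hpow]
        rw [show (∑ i : Fin k, (Q 1 - 7*Q 2 + 12*Q 3 - 6*Q 4) * δ i ^ 4)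
          = (Q 1 - 7*Q 2 + 12*Q 3 - 6*Q 4) * ∑ i, δ i ^ 4 from hpow _ 4]
        ring

section AuxMeasure

variable {Ω : Type*} [MeasurableSpace Ω] (μ : Measure Ω) {k L : ℕ}
  (Y : Fin k → Ω → Fin L) (r : Fin L)

lemma measurable_jointEvent (hmeas : ∀ i, Measurable (Y i)) (S : Finset (Fin k)) :
    MeasurableSet {ω | ∀ i ∈ S, Y i ω = r} := by
  have h : {ω | ∀ i ∈ S, Y i ω = r} = ⋂ i ∈ (S : Set (Fin k)), (Y i) ⁻¹' {r} := by
    ext ω; simp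
  rw [h]
  exact MeasurableSet.biInter (S : Set (Fin k)).to_countable
    (fun i _ => (hmeas i) (measurableSet_singleton r))

noncomputable def jointP (S : Finset (Fin k)) : ℝ := (μ {ω | ∀ i ∈ S, Y i ω = r}).toReal

lemma jointP_nonneg (S : Finset (Fin k)) : 0 ≤ jointP μ Y r S := ENNReal.toReal_nonneg

lemma jointP_mono [IsProbabilityMeasure μ] {S T : Finset (Fin k)} (h : S ⊆ T) :
    jointP μ Y r T ≤ jointP μ Y r S := by
  refine ENNReal.toReal_mono (measure_ne_top μ _) (measure_mono ?_)
  intro ω hω i hi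
  exact hω i (h hi)

end AuxMeasure

def canonF (k n : ℕ) : Finset (Fin k) :=
  (Finset.range (min n k)).attachFin
    (fun m hm => lt_of_lt_of_le (Finset.mem_range.mp hm) (min_le_right n k))

lemma canonF_card (k n : ℕ) : (canonF k n).card = min n k := by
  rw [canonF, Finset.card_attachFin, Finset.card_range]

lemma canonF_mono (k : ℕ) {n p : ℕ} (h : n ≤ p) : canonF k n ⊆ canonF k p := by
  intro x hx
  simp only [canonF, Finset.mem_attachFin, Finset.mem_range] at *
  omega

lemma canonF_one {k : ℕ} (hk : 0 < k) : canonF k 1 = {(⟨0, hk⟩ : Fin k)} := by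
  ext x
  simp only [canonF, Finset.mem_attachFin, Finset.mem_range, Finset.mem_singleton]
  constructor
  · intro h
    have hx : (x : ℕ) = 0 := by omega
    exact Fin.ext hx
  · rintro rfl
    simp
    omega

theorem partition_flattening_fourth_moment {Ω : Type*} [MeasurableSpace Ω]
    (μ : Measure Ω) [IsProbabilityMeasure μ]
    (k L : ℕ) (hk : 0 < k)
    (Y : Fin k → Ω → Fin L) (hmeas : ∀ i, Measurable (Y i))
    (hexch : ∀ σ : Equiv.Perm (Fin k),
      IdentDistrib (fun ω (i : Fin k) => Y (σ i) ω) (fun ω (i : Fin k) => Y i ω) μ μ)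
    (δ : Fin k → ℝ) (hδ : ∑ i, δ i = 0)
    (Z : Fin L → Ω → ℝ)
    (hZ : ∀ r ω, Z r ω = ∑ i, δ i * (if Y i ω = r then (1 : ℝ) else 0)) :
    (∀ r : Fin L,
      ∫ ω, Z r ω ^ 4 ∂μ ≤
        12 * (μ {ω | Y ⟨0, hk⟩ ω = r}).toReal * (∑ i, δ i ^ 2) ^ 2) ∧
    ∑ r : Fin L, ∫ ω, Z r ω ^ 4 ∂μ ≤ 12 * (∑ i, δ i ^ 2) ^ 2 := by
  have main : ∀ r : Fin L, ∫ ω, Z r ω ^ 4 ∂μ ≤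
      12 * (μ {ω | Y ⟨0, hk⟩ ω = r}).toReal * (∑ i, δ i ^ 2) ^ 2 := by
    intro r
    have hind : ∀ (i j l m : Fin k) (ω : Ω),
        (if Y i ω = r then (1:ℝ) else 0) * (if Y j ω = r then (1:ℝ) else 0)
          * (if Y l ω = r then (1:ℝ) else 0) * (if Y m ω = r then (1:ℝ) else 0)
        = ({ω' | ∀ t ∈ ({i, j, l, m} : Finset (Fin k)), Y t ω' = r}).indicator
            (fun _ => (1:ℝ)) ω := by
      intro i j l m ω
      simp only [Set.indicator_apply, Set.mem_setOf_eq, Finset.mem_insert, Finset.mem_singleton,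
        forall_eq_or_imp, forall_eq]
      by_cases h1 : Y i ω = r <;> by_cases h2 : Y j ω = r <;> by_cases h3 : Y l ω = r <;>
        by_cases h4 : Y m ω = r <;> simp [h1, h2, h3, h4]
    have hIntTerm : ∀ i j l m : Fin k, Integrable (fun ω =>
        (δ i * δ j * δ l * δ m) * ((if Y i ω = r then (1:ℝ) else 0)
          * (if Y j ω = r then (1:ℝ) else 0)
          * (if Y l ω = r then (1:ℝ) else 0) * (if Y m ω = r then (1:ℝ) else 0))) μ := by
      intro i j l m
      have heq : (fun ω => (δ i * δ j * δ l * δ m) * ((if Y i ω = r then (1:ℝ) else 0)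
          * (if Y j ω = r then (1:ℝ) else 0)
          * (if Y l ω = r then (1:ℝ) else 0) * (if Y m ω = r then (1:ℝ) else 0)))
          = fun ω => (δ i * δ j * δ l * δ m)
            * ({ω' | ∀ t ∈ ({i, j, l, m} : Finset (Fin k)), Y t ω' = r}).indicator
              (fun _ => (1:ℝ)) ω := by
        funext ω; rw [hind]
      rw [heq]
      exact ((integrable_const (1:ℝ)).indicator (measurable_jointEvent Y r hmeas _)).const_mul _
    have hTermVal : ∀ i j l m : Fin k,
        ∫ ω, (δ i * δ j * δ l * δ m) * ((if Y i ω = r then (1:ℝ) else 0)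
          * (if Y j ω = r then (1:ℝ) else 0)
          * (if Y l ω = r then (1:ℝ) else 0) * (if Y m ω = r then (1:ℝ) else 0)) ∂μ
        = (δ i * δ j * δ l * δ m) * jointP μ Y r {i, j, l, m} := by
      intro i j l m
      calc ∫ ω, (δ i * δ j * δ l * δ m) * ((if Y i ω = r then (1:ℝ) else 0)
            * (if Y j ω = r then (1:ℝ) else 0)
            * (if Y l ω = r then (1:ℝ) else 0) * (if Y m ω = r then (1:ℝ) else 0)) ∂μ
          = ∫ ω, (δ i * δ j * δ l * δ m)
              * ({ω' | ∀ t ∈ ({i, j, l, m} : Finset (Fin k)), Y t ω' = r}).indicator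
                (fun _ => (1:ℝ)) ω ∂μ := by
            congr 1; funext ω; rw [hind]
        _ = (δ i * δ j * δ l * δ m)
              * ∫ ω, ({ω' | ∀ t ∈ ({i, j, l, m} : Finset (Fin k)), Y t ω' = r}).indicator
                (fun _ => (1:ℝ)) ω ∂μ := integral_const_mul _ _
        _ = (δ i * δ j * δ l * δ m) * jointP μ Y r {i, j, l, m} := by
            rw [integral_indicator_const (1:ℝ) (measurable_jointEvent Y r hmeas _)]
            simp [jointP, Measure.real]
    have hpt : ∀ ω, Z r ω ^ 4 = ∑ i, ∑ j, ∑ l, ∑ m, (δ i * δ j * δ l * δ m)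
        * ((if Y i ω = r then (1:ℝ) else 0) * (if Y j ω = r then (1:ℝ) else 0)
          * (if Y l ω = r then (1:ℝ) else 0) * (if Y m ω = r then (1:ℝ) else 0)) := by
      intro ω
      rw [hZ]
      rw [show (∑ i, δ i * (if Y i ω = r then (1:ℝ) else 0)) ^ 4
          = (∑ i, δ i * (if Y i ω = r then (1:ℝ) else 0))
            * ((∑ i, δ i * (if Y i ω = r then (1:ℝ) else 0))
              * ((∑ i, δ i * (if Y i ω = r then (1:ℝ) else 0))
                * (∑ i, δ i * (if Y i ω = r then (1:ℝ) else 0)))) from by ring]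
      simp only [Finset.sum_mul, Finset.mul_sum]
      refine Finset.sum_congr rfl fun i _ => Finset.sum_congr rfl fun j _ =>
        Finset.sum_congr rfl fun l _ => Finset.sum_congr rfl fun m _ => by ring
    have hI3 : ∀ i j l : Fin k, Integrable (fun ω => ∑ m, (δ i * δ j * δ l * δ m)
        * ((if Y i ω = r then (1:ℝ) else 0) * (if Y j ω = r then (1:ℝ) else 0)
          * (if Y l ω = r then (1:ℝ) else 0) * (if Y m ω = r then (1:ℝ) else 0))) μ :=
      fun i j l => integrable_finset_sum _ (fun m _ => hIntTerm i j l m)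
    have hI2 : ∀ i j : Fin k, Integrable (fun ω => ∑ l, ∑ m, (δ i * δ j * δ l * δ m)
        * ((if Y i ω = r then (1:ℝ) else 0) * (if Y j ω = r then (1:ℝ) else 0)
          * (if Y l ω = r then (1:ℝ) else 0) * (if Y m ω = r then (1:ℝ) else 0))) μ :=
      fun i j => integrable_finset_sum _ (fun l _ => hI3 i j l)
    have hI1 : ∀ i : Fin k, Integrable (fun ω => ∑ j, ∑ l, ∑ m, (δ i * δ j * δ l * δ m)
        * ((if Y i ω = r then (1:ℝ) else 0) * (if Y j ω = r then (1:ℝ) else 0)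
          * (if Y l ω = r then (1:ℝ) else 0) * (if Y m ω = r then (1:ℝ) else 0))) μ :=
      fun i => integrable_finset_sum _ (fun j _ => hI2 i j)
    have hZexp : ∫ ω, Z r ω ^ 4 ∂μ
        = ∑ i, ∑ j, ∑ l, ∑ m, (δ i * δ j * δ l * δ m) * jointP μ Y r {i, j, l, m} := by
      calc ∫ ω, Z r ω ^ 4 ∂μ
          = ∫ ω, (∑ i, ∑ j, ∑ l, ∑ m, (δ i * δ j * δ l * δ m)
            * ((if Y i ω = r then (1:ℝ) else 0) * (if Y j ω = r then (1:ℝ) else 0)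
              * (if Y l ω = r then (1:ℝ) else 0) * (if Y m ω = r then (1:ℝ) else 0))) ∂μ := by
            congr 1; funext ω; exact hpt ω
        _ = ∑ i, ∑ j, ∑ l, ∑ m, ∫ ω, (δ i * δ j * δ l * δ m)
            * ((if Y i ω = r then (1:ℝ) else 0) * (if Y j ω = r then (1:ℝ) else 0)
              * (if Y l ω = r then (1:ℝ) else 0) * (if Y m ω = r then (1:ℝ) else 0)) ∂μ := by
            rw [integral_finset_sum _ (fun i _ => hI1 i)]
            refine Finset.sum_congr rfl fun i _ => ?_
            rw [integral_finset_sum _ (fun j _ => hI2 i j)]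
            refine Finset.sum_congr rfl fun j _ => ?_
            rw [integral_finset_sum _ (fun l _ => hI3 i j l)]
            refine Finset.sum_congr rfl fun l _ => ?_
            rw [integral_finset_sum _ (fun m _ => hIntTerm i j l m)]
        _ = ∑ i, ∑ j, ∑ l, ∑ m, (δ i * δ j * δ l * δ m) * jointP μ Y r {i, j, l, m} :=
            Finset.sum_congr rfl fun i _ => Finset.sum_congr rfl fun j _ =>
              Finset.sum_congr rfl fun l _ => Finset.sum_congr rfl fun m _ => hTermVal i j l m
    have hcardle : ∀ S : Finset (Fin k), S.card ≤ k :=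
      fun S => le_trans (Finset.card_le_univ S) (le_of_eq (by simp))
    have hPQ : ∀ S : Finset (Fin k), jointP μ Y r S = jointP μ Y r (canonF k S.card) := by
      intro S
      have hc : S.card = (canonF k S.card).card := by
        rw [canonF_card, min_eq_left (hcardle S)]
      exact congrArg ENNReal.toReal (joint_event_invariant μ Y hmeas hexch r hc)
    have hkey : ∑ i, ∑ j, ∑ l, ∑ m, (δ i * δ j * δ l * δ m) * jointP μ Y r {i, j, l, m}
        = 3*(jointP μ Y r (canonF k 2) - 2*jointP μ Y r (canonF k 3) + jointP μ Y r (canonF k 4))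
            * (∑ i, δ i ^ 2)^2
          + (jointP μ Y r (canonF k 1) - 7*jointP μ Y r (canonF k 2)
              + 12*jointP μ Y r (canonF k 3) - 6*jointP μ Y r (canonF k 4)) * (∑ i, δ i ^ 4) := by
      have h := quad_sum_eval δ hδ (fun n => jointP μ Y r (canonF k n))
      calc ∑ i, ∑ j, ∑ l, ∑ m, (δ i * δ j * δ l * δ m) * jointP μ Y r {i, j, l, m}
          = ∑ i, ∑ j, ∑ l, ∑ m, (δ i * δ j * δ l * δ m)
              * (fun n => jointP μ Y r (canonF k n)) (({i, j, l, m} : Finset (Fin k)).card) :=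
            Finset.sum_congr rfl fun i _ => Finset.sum_congr rfl fun j _ =>
              Finset.sum_congr rfl fun l _ => Finset.sum_congr rfl fun m _ =>
                congrArg _ (hPQ {i, j, l, m})
        _ = _ := h
    have h21 : jointP μ Y r (canonF k 2) ≤ jointP μ Y r (canonF k 1) :=
      jointP_mono μ Y r (canonF_mono k (by norm_num))
    have h32 : jointP μ Y r (canonF k 3) ≤ jointP μ Y r (canonF k 2) :=
      jointP_mono μ Y r (canonF_mono k (by norm_num))
    have h43 : jointP μ Y r (canonF k 4) ≤ jointP μ Y r (canonF k 3) :=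
      jointP_mono μ Y r (canonF_mono k (by norm_num))
    have h4nn : 0 ≤ jointP μ Y r (canonF k 4) := jointP_nonneg μ Y r _
    have hQ1 : jointP μ Y r (canonF k 1) = (μ {ω | Y ⟨0, hk⟩ ω = r}).toReal := by
      rw [canonF_one hk]
      have hev : {ω | ∀ i ∈ ({(⟨0, hk⟩ : Fin k)} : Finset (Fin k)), Y i ω = r}
          = {ω | Y ⟨0, hk⟩ ω = r} := by
        ext ω; simp
      show (μ {ω | ∀ i ∈ ({(⟨0, hk⟩ : Fin k)} : Finset (Fin k)), Y i ω = r}).toReal = _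
      rw [hev]
    have hs42 : (∑ i, δ i ^ 4) ≤ (∑ i, δ i ^ 2)^2 := by
      have h1 : (∑ i, δ i ^ 4) = ∑ i, (δ i ^ 2)^2 := Finset.sum_congr rfl fun i _ => by ring
      rw [h1]
      exact Finset.sum_sq_le_sq_sum_of_nonneg (fun i _ => sq_nonneg _)
    have hs4nn : (0:ℝ) ≤ ∑ i, δ i ^ 4 := Finset.sum_nonneg fun i _ => by positivity
    rw [hZexp, hkey, ← hQ1]
    nlinarith [mul_nonneg (sub_nonneg.2 h21) (sub_nonneg.2 hs42),
      mul_nonneg (sub_nonneg.2 h21) hs4nn,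
      mul_nonneg (sub_nonneg.2 h32) (sub_nonneg.2 hs42),
      mul_nonneg (sub_nonneg.2 h32) hs4nn,
      mul_nonneg (sub_nonneg.2 h43) (sub_nonneg.2 hs42),
      mul_nonneg (sub_nonneg.2 h43) hs4nn,
      mul_nonneg h4nn (sub_nonneg.2 hs42),
      mul_nonneg h4nn hs4nn]
  refine ⟨main, ?_⟩
  have hsum1 : ∑ r : Fin L, (μ {ω | Y ⟨0, hk⟩ ω = r}).toReal = 1 := by
    have hd : (↑(Finset.univ : Finset (Fin L)) : Set (Fin L)).PairwiseDisjoint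
        (fun r => {ω | Y ⟨0, hk⟩ ω = r}) := by
      intro a _ b _ hab
      refine Set.disjoint_left.mpr ?_
      intro ω ha hb
      have ha' : Y ⟨0, hk⟩ ω = a := ha
      have hb' : Y ⟨0, hk⟩ ω = b := hb
      exact hab (ha'.symm.trans hb')
    have hm : ∀ b ∈ (Finset.univ : Finset (Fin L)),
        MeasurableSet {ω | Y ⟨0, hk⟩ ω = b} :=
      fun b _ => (hmeas _) (measurableSet_singleton b)
    have hu : (⋃ r ∈ (Finset.univ : Finset (Fin L)), {ω | Y ⟨0, hk⟩ ω = r}) = Set.univ := by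
      ext ω; simp
    rw [← ENNReal.toReal_sum (fun a _ => measure_ne_top μ _), ← measure_biUnion_finset hd hm,
      hu, measure_univ, ENNReal.toReal_one]
  calc ∑ r : Fin L, ∫ ω, Z r ω ^ 4 ∂μ
      ≤ ∑ r : Fin L, 12 * (μ {ω | Y ⟨0, hk⟩ ω = r}).toReal * (∑ i, δ i ^ 2) ^ 2 :=
        Finset.sum_le_sum fun r _ => main r
    _ = 12 * (∑ i, δ i ^ 2) ^ 2 := by
        rw [← Finset.sum_mul, ← Finset.mul_sum, hsum1, mul_one]
end

section
/- Let p, q be probability distributions on [k] with d_TV(p,q) > ε, let S ⊆ [k] be a set with q([k]∖S) ≤ ε/3 and p([k]∖S) ≤ ε/3, and define distributions p̃, q̃ on S ∪ {⊥} by p̃(x) = p(x) for x ∈ S, p̃(⊥) = p([k]∖S), and similarly for q̃. Then d_TV(p̃, q̃) > 2ε/3. -/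
/-!
The collapsed tail term can simply be dropped: on `S` alone the `ℓ¹` distance is still at least
`‖p - q‖₁ - p(Sᶜ) - q(Sᶜ) > 2ε - 2ε/3`, since on `Sᶜ` each `|p i - q i| ≤ p i + q i`.
-/

open Finset

lemma Finset.sum_abs_sub_le_sum_add_sum {ι : Type*} (s : Finset ι) {p q : ι → ℝ}
    (hp : ∀ i ∈ s, 0 ≤ p i) (hq : ∀ i ∈ s, 0 ≤ q i) :
    ∑ i ∈ s, |p i - q i| ≤ ∑ i ∈ s, p i + ∑ i ∈ s, q i := by
  rw [← sum_add_distrib]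
  refine sum_le_sum fun i hi => ?_
  calc |p i - q i| ≤ |p i| + |q i| := abs_sub _ _
    _ = p i + q i := by rw [abs_of_nonneg (hp i hi), abs_of_nonneg (hq i hi)]

lemma Finset.sum_abs_sub_le_sum_abs_sub_add_compl {ι : Type*} [Fintype ι] [DecidableEq ι]
    (s : Finset ι) {p q : ι → ℝ} (hp : ∀ i, 0 ≤ p i) (hq : ∀ i, 0 ≤ q i) :
    ∑ i, |p i - q i| ≤ ∑ i ∈ s, |p i - q i| + (∑ i ∈ sᶜ, p i + ∑ i ∈ sᶜ, q i) := by
  rw [← sum_add_sum_compl s]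
  gcongr
  exact sᶜ.sum_abs_sub_le_sum_add_sum (fun i _ => hp i) (fun i _ => hq i)

theorem tail_collapse_preserves_tv_general (k : ℕ) (ε : ℝ)
    (p q : Fin k → ℝ)
    (hp0 : ∀ i, 0 ≤ p i)
    (hq0 : ∀ i, 0 ≤ q i)
    (S : Finset (Fin k))
    (hqtail : ∑ i ∈ Sᶜ, q i ≤ ε / 3)
    (hptail : ∑ i ∈ Sᶜ, p i ≤ ε / 3)
    (htv : (1 / 2) * ∑ i, |p i - q i| > ε) :
    (1 / 2) * (∑ i ∈ S, |p i - q i| + |(∑ i ∈ Sᶜ, p i) - ∑ i ∈ Sᶜ, q i|)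
      > 2 * ε / 3 := by
  have hdist_le := S.sum_abs_sub_le_sum_abs_sub_add_compl hp0 hq0
  have htail_nonneg := abs_nonneg ((∑ i ∈ Sᶜ, p i) - ∑ i ∈ Sᶜ, q i)
  linarith

theorem tail_collapse_preserves_tv (k : ℕ) (ε : ℝ)
    (p q : Fin k → ℝ)
    (hp0 : ∀ i, 0 ≤ p i) (hp1 : ∑ i, p i = 1)
    (hq0 : ∀ i, 0 ≤ q i) (hq1 : ∑ i, q i = 1)
    (S : Finset (Fin k))
    (hqtail : ∑ i ∈ Sᶜ, q i ≤ ε / 3)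
    (hptail : ∑ i ∈ Sᶜ, p i ≤ ε / 3)
    (htv : (1 / 2) * ∑ i, |p i - q i| > ε) :
    (1 / 2) * (∑ i ∈ S, |p i - q i| + |(∑ i ∈ Sᶜ, p i) - ∑ i ∈ Sᶜ, q i|)
      > 2 * ε / 3 :=
  tail_collapse_preserves_tv_general k ε p q hp0 hq0 S hqtail hptail htv
end
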